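/- Let 1 < q < p. For μ > 0 define λ(μ) := inf{(‖u'‖_p² + μ‖u‖_q²)/‖u‖_p² : u 2π-periodic, C¹, not identically zero}. Then the function μ ↦ λ(μ) is concave on (0,∞), satisfies λ(μ) ≤ μ for every μ > 0, and λ(μ) < μ whenever μ > λ₁*/(p − q). -/

import Mathlib

open MeasureTheory Real

/-- The L^r norm on the circle with the uniform probability measure dσ = dx/(2π),
for a 2π-periodic function `u : ℝ → ℝ`. -/
noncomputable def perNorm (r : ℝ) (u : ℝ → ℝ) : ℝ :=
  ((1 / (2 * π)) * ∫ x in (0:ℝ)..(2 * π), |u x| ^ r) ^ (1 / r)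

/-- `u` is 2π-periodic and C¹. -/
def PeriodicC1 (u : ℝ → ℝ) : Prop :=
  Function.Periodic u (2 * π) ∧ ContDiff ℝ 1 u

/-- λ₁ = inf ‖v'‖_p²/‖v‖_p² over 2π-periodic C¹ functions v ≢ 0 with ∫₀^{2π} v dx = 0. -/
noncomputable def lambdaOne (p : ℝ) : ℝ :=
  sInf { l : ℝ | ∃ v : ℝ → ℝ, PeriodicC1 v ∧ v ≠ 0 ∧
    (∫ x in (0:ℝ)..(2 * π), v x) = 0 ∧
    l = (perNorm p (deriv v)) ^ 2 / (perNorm p v) ^ 2 }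

/-- λ₁* = inf ‖v'‖_p²/‖v‖_2² over 2π-periodic C¹ functions v ≢ 0 with ∫₀^{2π} v dx = 0. -/
noncomputable def lambdaOneStar (p : ℝ) : ℝ :=
  sInf { l : ℝ | ∃ v : ℝ → ℝ, PeriodicC1 v ∧ v ≠ 0 ∧
    (∫ x in (0:ℝ)..(2 * π), v x) = 0 ∧
    l = (perNorm p (deriv v)) ^ 2 / (perNorm 2 v) ^ 2 }

/-- The p-Laplacian L_p u = (|u'|^{p-2} u')'. -/
noncomputable def pLap (p : ℝ) (u : ℝ → ℝ) : ℝ → ℝ :=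
  deriv (fun x => |deriv u x| ^ (p - 2) * deriv u x)

/-! λ(μ) is an infimum of Rayleigh quotients `(‖u'‖_p² + μ‖u‖_q²)/‖u‖_p²`, each affine in μ, so it
is concave, and the constant function `1` has quotient μ. For the strict inequality,
`μ > λ₁*/(p - q)` gives `v` with mean zero and `‖v'‖_p² < (p - q) μ ‖v‖₂²`; test `u = 1 + εv`:
for every `r ≠ 0`, `‖1 + εv‖_r² = 1 + (r - 1)‖v‖₂² ε² + o(ε²)` (second-order Taylor expansion of
`(1 + s)^r`, where the linear term integrates to zero), so the quotient of `u` is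
`μ + ε²(‖v'‖_p² - (p - q)μ‖v‖₂²) + o(ε²) < μ` for small `ε ≠ 0`. -/

open Set Filter Topology Asymptotics

theorem ConcaveOn.ciInf {ι E : Type*} [Nonempty ι] [AddCommMonoid E] [Module ℝ E] {s : Set E}
    {f : ι → E → ℝ} (hf : ∀ i, ConcaveOn ℝ s (f i))
    (hbdd : ∀ x ∈ s, BddBelow (range fun i => f i x)) :
    ConcaveOn ℝ s fun x => ⨅ i, f i x := by
  refine ⟨(hf (Classical.arbitrary ι)).1, fun x hx y hy a b ha hb hab => le_ciInf fun i => ?_⟩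
  exact (add_le_add (smul_le_smul_of_nonneg_left (ciInf_le (hbdd x hx) i) ha)
    (smul_le_smul_of_nonneg_left (ciInf_le (hbdd y hy) i) hb)).trans ((hf i).2 hx hy ha hb hab)

theorem isLittleO_one_add_rpow_sub_linear (c : ℝ) :
    (fun s : ℝ => (1 + s) ^ c - 1 - c * s) =o[𝓝 0] fun s => s := by
  have h := hasDerivAt_iff_isLittleO_nhds_zero.mp
    (Real.hasDerivAt_rpow_const (x := 1) (p := c) (Or.inl one_ne_zero))
  simp only [Real.one_rpow, mul_one, smul_eq_mul] at h
  exact h.congr_left fun s => by ring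

theorem isLittleO_one_add_rpow_sub_quadratic (c : ℝ) :
    (fun s : ℝ => (1 + s) ^ c - 1 - c * s - c * (c - 1) / 2 * s ^ 2) =o[𝓝 0] fun s => s ^ 2 := by
  have hderiv : ∀ s ∈ Ioi (-1 : ℝ),
      HasDerivWithinAt (fun s : ℝ => (1 + s) ^ c - 1 - c * s - c * (c - 1) / 2 * s ^ 2)
        (c * ((1 + s) ^ (c - 1) - 1 - (c - 1) * s)) (Ioi (-1)) s := by
    intro s hs
    have hbase : 1 + s ≠ 0 := by linarith [mem_Ioi.mp hs]
    have h := ((((Real.hasDerivAt_rpow_const (p := c) (Or.inl hbase)).comp s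
      ((hasDerivAt_id s).const_add 1)).sub_const 1).sub ((hasDerivAt_id s).const_mul c)).sub
      ((hasDerivAt_pow 2 s).const_mul (c * (c - 1) / 2))
    refine (h.congr_deriv ?_).hasDerivWithinAt
    push_cast
    ring
  have hnhds : 𝓝[Ioi (-1 : ℝ)] 0 = 𝓝 0 := nhdsWithin_eq_nhds.mpr (Ioi_mem_nhds (by norm_num))
  have h := (convex_Ioi (-1 : ℝ)).isLittleO_pow_succ_real (x₀ := 0) (by norm_num) hderiv
    (n := 1) (by simpa [hnhds] using (isLittleO_one_add_rpow_sub_linear (c - 1)).const_mul_left c)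
  simpa [hnhds] using h

theorem isLittleO_intervalIntegral_comp_mul {g v : ℝ → ℝ} {a b M : ℝ}
    (hg : g =o[𝓝 0] fun s => s ^ 2) (hv : ∀ x ∈ uIcc a b, |v x| ≤ M) :
    (fun ε => ∫ x in a..b, g (ε * v x)) =o[𝓝 0] fun ε => ε ^ 2 := by
  rw [isLittleO_iff]
  intro c hc
  set K := (M ^ 2 + 1) * (|b - a| + 1)
  have hK : 0 < K := by positivity
  obtain ⟨δ, hδ, hgδ⟩ := Metric.eventually_nhds_iff.mp (hg.def (div_pos hc hK))
  have hsmall : ∀ᶠ ε in 𝓝 (0 : ℝ), |ε| * |M| < δ := by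
    have hcont : Continuous fun ε : ℝ => |ε| * |M| := by fun_prop
    exact hcont.tendsto' 0 0 (by simp) |>.eventually (gt_mem_nhds hδ)
  filter_upwards [hsmall] with ε hε
  have hpt : ∀ x ∈ uIoc a b, ‖g (ε * v x)‖ ≤ c / K * (ε ^ 2 * M ^ 2) := by
    intro x hx
    have hvx := hv x (uIoc_subset_uIcc hx)
    have hdist : dist (ε * v x) 0 < δ := by
      rw [dist_zero_right, Real.norm_eq_abs, abs_mul]
      calc |ε| * |v x| ≤ |ε| * |M| :=
          mul_le_mul_of_nonneg_left (hvx.trans (le_abs_self M)) (abs_nonneg ε)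
        _ < δ := hε
    have hsq : (v x) ^ 2 ≤ M ^ 2 := sq_le_sq' (abs_le.mp hvx).1 (abs_le.mp hvx).2
    calc ‖g (ε * v x)‖ ≤ c / K * ‖(ε * v x) ^ 2‖ := hgδ hdist
      _ = c / K * (ε ^ 2 * (v x) ^ 2) := by
          rw [Real.norm_eq_abs, abs_of_nonneg (by positivity)]
          ring
      _ ≤ c / K * (ε ^ 2 * M ^ 2) := by gcongr
  calc ‖∫ x in a..b, g (ε * v x)‖ ≤ c / K * (ε ^ 2 * M ^ 2) * |b - a| :=
        intervalIntegral.norm_integral_le_of_norm_le_const hpt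
    _ = c * ε ^ 2 * (M ^ 2 * |b - a| / K) := by ring
    _ ≤ c * ε ^ 2 * 1 := by
        gcongr
        rw [div_le_one hK]
        nlinarith [abs_nonneg (b - a), sq_nonneg M]
    _ = c * ‖ε ^ 2‖ := by rw [Real.norm_eq_abs, abs_of_nonneg (sq_nonneg ε), mul_one]

noncomputable def perMean (r : ℝ) (u : ℝ → ℝ) : ℝ :=
  (1 / (2 * π)) * ∫ x in (0:ℝ)..(2 * π), |u x| ^ r

theorem perMean_nonneg (r : ℝ) (u : ℝ → ℝ) : 0 ≤ perMean r u :=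
  mul_nonneg (by positivity) (intervalIntegral.integral_nonneg (by positivity)
    fun x _ => Real.rpow_nonneg (abs_nonneg _) r)

theorem perNorm_sq (r : ℝ) (u : ℝ → ℝ) : perNorm r u ^ 2 = perMean r u ^ (2 / r) := by
  rw [perNorm, ← perMean, ← Real.rpow_natCast, ← Real.rpow_mul (perMean_nonneg r u)]
  congr 1
  ring

theorem perNorm_one (r : ℝ) : perNorm r (fun _ => 1) = 1 := by
  simp only [perNorm, abs_one, Real.one_rpow, intervalIntegral.integral_const, sub_zero,
    smul_eq_mul, mul_one]
  rw [one_div_mul_cancel (by positivity), Real.one_rpow]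

theorem perNorm_zero {r : ℝ} (hr : r ≠ 0) : perNorm r (fun _ => 0) = 0 := by
  simp [perNorm, Real.zero_rpow hr, hr]

theorem perNorm_const_mul {r : ℝ} (hr : 0 < r) (c : ℝ) (w : ℝ → ℝ) :
    perNorm r (fun x => c * w x) = |c| * perNorm r w := by
  have hpt : ∀ x, |c * w x| ^ r = |c| ^ r * |w x| ^ r := fun x => by
    rw [abs_mul, Real.mul_rpow (abs_nonneg c) (abs_nonneg _)]
  have hmean : perMean r (fun x => c * w x) = |c| ^ r * perMean r w := by
    simp only [perMean, hpt, intervalIntegral.integral_const_mul]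
    ring
  change perMean r (fun x => c * w x) ^ (1 / r) = |c| * perMean r w ^ (1 / r)
  rw [hmean, Real.mul_rpow (by positivity) (perMean_nonneg r w), one_div r,
    Real.rpow_rpow_inv (abs_nonneg c) hr.ne']

theorem perNorm_two_sq (v : ℝ → ℝ) :
    perNorm 2 v ^ 2 = (1 / (2 * π)) * ∫ x in (0:ℝ)..(2 * π), v x ^ 2 := by
  simp only [perNorm_sq, perMean, Real.rpow_two, sq_abs]
  norm_num

theorem perNorm_two_sq_pos {v : ℝ → ℝ} (hper : Function.Periodic v (2 * π))
    (hv : Continuous v) (hne : v ≠ 0) : 0 < perNorm 2 v ^ 2 := by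
  obtain ⟨x₀, hx₀⟩ := Function.ne_iff.mp hne
  obtain ⟨c, hc, hcx₀⟩ := hper.exists_mem_Ico₀ (by positivity) x₀
  rw [perNorm_two_sq]
  refine mul_pos (by positivity) (intervalIntegral.integral_pos (by positivity)
    (hv.pow 2).continuousOn (fun x _ => sq_nonneg _) ⟨c, Ico_subset_Icc_self hc, ?_⟩)
  exact sq_pos_of_ne_zero (hcx₀ ▸ hx₀)

theorem isLittleO_perMean_one_add_mul (r : ℝ) {v : ℝ → ℝ} (hv : Continuous v)
    (hmean : ∫ x in (0:ℝ)..(2 * π), v x = 0) :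
    (fun ε => perMean r (fun x => 1 + ε * v x) - 1 - r * (r - 1) / 2 * perNorm 2 v ^ 2 * ε ^ 2)
      =o[𝓝 0] fun ε => ε ^ 2 := by
  obtain ⟨M, hM⟩ :=
    isCompact_uIcc.exists_bound_of_continuousOn (hv.continuousOn (s := uIcc 0 (2 * π)))
  have hI := (isLittleO_intervalIntegral_comp_mul (isLittleO_one_add_rpow_sub_quadratic r)
    fun x hx => hM x hx).const_mul_left (1 / (2 * π))
  refine hI.congr' ?_ EventuallyEq.rfl
  have hsmall : ∀ᶠ ε in 𝓝 (0 : ℝ), |ε| * M < 1 := by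
    have hcont : Continuous fun ε : ℝ => |ε| * M := by fun_prop
    exact hcont.tendsto' 0 0 (by simp) |>.eventually (gt_mem_nhds one_pos)
  filter_upwards [hsmall] with ε hε
  have hpos : ∀ x ∈ uIcc 0 (2 * π), 0 < 1 + ε * v x := fun x hx => by
    have h := (abs_le.mp ((abs_mul ε (v x)).trans_le
      (mul_le_mul_of_nonneg_left (hM x hx) (abs_nonneg ε)))).1
    linarith
  have hF : IntervalIntegrable (fun x => (1 + ε * v x) ^ r) volume 0 (2 * π) :=
    (ContinuousOn.rpow_const (by fun_prop) fun x hx => Or.inl (hpos x hx).ne').intervalIntegrable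
  have hG : IntervalIntegrable (fun x => 1 + r * ε * v x + r * (r - 1) / 2 * ε ^ 2 * v x ^ 2)
      volume 0 (2 * π) := by
    apply Continuous.intervalIntegrable
    fun_prop
  have hsplit : ∫ x in (0:ℝ)..(2 * π), ((1 + ε * v x) ^ r - 1 - r * (ε * v x)
        - r * (r - 1) / 2 * (ε * v x) ^ 2) =
      (∫ x in (0:ℝ)..(2 * π), |1 + ε * v x| ^ r) - (2 * π
        + r * (r - 1) / 2 * ε ^ 2 * ∫ x in (0:ℝ)..(2 * π), v x ^ 2) := by
    have habs : ∫ x in (0:ℝ)..(2 * π), |1 + ε * v x| ^ r =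
        ∫ x in (0:ℝ)..(2 * π), (1 + ε * v x) ^ r :=
      intervalIntegral.integral_congr fun x hx => by simp only [abs_of_pos (hpos x hx)]
    have hGint : ∫ x in (0:ℝ)..(2 * π), (1 + r * ε * v x + r * (r - 1) / 2 * ε ^ 2 * v x ^ 2) =
        2 * π + r * (r - 1) / 2 * ε ^ 2 * ∫ x in (0:ℝ)..(2 * π), v x ^ 2 := by
      rw [intervalIntegral.integral_add (by apply Continuous.intervalIntegrable; fun_prop)
          (by apply Continuous.intervalIntegrable; fun_prop),
        intervalIntegral.integral_add intervalIntegrable_const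
          (by apply Continuous.intervalIntegrable; fun_prop),
        intervalIntegral.integral_const_mul, intervalIntegral.integral_const_mul, hmean]
      simp
    rw [habs, ← hGint, ← intervalIntegral.integral_sub hF hG]
    exact intervalIntegral.integral_congr fun x _ => by ring
  simp only [perMean, perNorm_two_sq, hsplit]
  field_simp
  ring

theorem isLittleO_perNorm_one_add_mul_sq {r : ℝ} (hr : r ≠ 0) {v : ℝ → ℝ} (hv : Continuous v)
    (hmean : ∫ x in (0:ℝ)..(2 * π), v x = 0) :
    (fun ε => perNorm r (fun x => 1 + ε * v x) ^ 2 - 1 - (r - 1) * perNorm 2 v ^ 2 * ε ^ 2)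
      =o[𝓝 0] fun ε => ε ^ 2 := by
  set a : ℝ → ℝ := fun ε => perMean r (fun x => 1 + ε * v x) - 1
  have hmeanO := isLittleO_perMean_one_add_mul r hv hmean
  have ha : a =O[𝓝 0] fun ε => ε ^ 2 :=
    (hmeanO.isBigO.add ((isBigO_refl (fun ε : ℝ => ε ^ 2) _).const_mul_left
      (r * (r - 1) / 2 * perNorm 2 v ^ 2))).congr_left fun ε => by ring
  have ha0 : Tendsto a (𝓝 0) (𝓝 0) :=
    ha.trans_tendsto (by simpa using (continuous_pow 2).tendsto (0 : ℝ))
  have hcomp := ((isLittleO_one_add_rpow_sub_linear (2 / r)).comp_tendsto ha0).trans_isBigO ha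
  refine (hcomp.add (hmeanO.const_mul_left (2 / r))).congr_left fun ε => ?_
  simp only [Function.comp_apply, perNorm_sq, a, add_sub_cancel]
  field_simp
  ring

theorem eventually_mul_sq_add_neg {f : ℝ → ℝ} {κ : ℝ} (hf : f =o[𝓝 0] fun ε => ε ^ 2)
    (hκ : κ < 0) : ∀ᶠ ε in 𝓝[≠] 0, κ * ε ^ 2 + f ε < 0 := by
  filter_upwards [nhdsWithin_le_nhds (hf.def (c := -κ / 2) (by linarith)), self_mem_nhdsWithin]
    with ε hfε hε
  rw [Real.norm_eq_abs, Real.norm_eq_abs, abs_of_nonneg (sq_nonneg ε)] at hfε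
  have hε2 : 0 < ε ^ 2 := sq_pos_of_ne_zero hε
  nlinarith [le_abs_self (f ε)]

noncomputable def rayleighQuotient (p q m : ℝ) (u : ℝ → ℝ) : ℝ :=
  ((perNorm p (deriv u)) ^ 2 + m * (perNorm q u) ^ 2) / (perNorm p u) ^ 2

theorem rayleighQuotient_nonneg (p q : ℝ) {m : ℝ} (hm : 0 ≤ m) (u : ℝ → ℝ) :
    0 ≤ rayleighQuotient p q m u := by
  unfold rayleighQuotient
  positivity

theorem rayleighQuotient_one {p : ℝ} (hp : p ≠ 0) (q m : ℝ) :
    rayleighQuotient p q m (fun _ => 1) = m := by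
  simp [rayleighQuotient, perNorm_zero hp, perNorm_one]

theorem concaveOn_rayleighQuotient (p q : ℝ) (u : ℝ → ℝ) :
    ConcaveOn ℝ univ fun m => rayleighQuotient p q m u := by
  refine ⟨convex_univ, fun x _ y _ a b _ _ hab => le_of_eq ?_⟩
  simp only [rayleighQuotient, smul_eq_mul, div_eq_mul_inv]
  linear_combination (perNorm p (deriv u) ^ 2 * (perNorm p u ^ 2)⁻¹) * hab

theorem exists_rayleighQuotient_lt {p q m : ℝ} (hp : 0 < p) (hq : q ≠ 0) (hm : 0 < m)
    {v : ℝ → ℝ} (hv : PeriodicC1 v) (hmean : ∫ x in (0:ℝ)..(2 * π), v x = 0)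
    (hlt : perNorm p (deriv v) ^ 2 < (p - q) * m * perNorm 2 v ^ 2) :
    ∃ u, PeriodicC1 u ∧ u ≠ 0 ∧ rayleighQuotient p q m u < m := by
  have hvc := hv.2.continuous
  have hneg := eventually_mul_sq_add_neg
    (((isLittleO_perNorm_one_add_mul_sq hq hvc hmean).const_mul_left m).sub
      ((isLittleO_perNorm_one_add_mul_sq hp.ne' hvc hmean).const_mul_left m)) (sub_neg.mpr hlt)
  have hne : ∀ᶠ ε in 𝓝[≠] (0 : ℝ), 1 + ε * v 0 ≠ 0 := by
    have hcont : Continuous fun ε : ℝ => 1 + ε * v 0 := by fun_prop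
    exact nhdsWithin_le_nhds (hcont.tendsto' 0 1 (by simp) |>.eventually_ne one_ne_zero)
  obtain ⟨ε, hε, hεne⟩ := (hneg.and hne).exists
  have hderiv : deriv (fun x => 1 + ε * v x) = fun x => ε * deriv v x := funext fun x => by
    simp [(hv.2.differentiable one_ne_zero).differentiableAt]
  refine ⟨fun x => 1 + ε * v x,
    ⟨fun x => by simp only [hv.1 x], contDiff_const.add (contDiff_const.mul hv.2)⟩,
    fun h => hεne (congrFun h 0), ?_⟩
  have hnum : perNorm p (deriv fun x => 1 + ε * v x) ^ 2 = ε ^ 2 * perNorm p (deriv v) ^ 2 := by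
    rw [hderiv, perNorm_const_mul hp, mul_pow, sq_abs]
  have hlt' : ε ^ 2 * perNorm p (deriv v) ^ 2 + m * perNorm q (fun x => 1 + ε * v x) ^ 2 <
      m * perNorm p (fun x => 1 + ε * v x) ^ 2 := by
    linear_combination hε
  have hFp : 0 < perNorm p (fun x => 1 + ε * v x) ^ 2 :=
    pos_of_mul_pos_right ((by positivity : (0:ℝ) ≤ _).trans_lt hlt') hm.le
  rw [rayleighQuotient, hnum, div_lt_iff₀ hFp]
  exact hlt'

theorem lambdaOneStar_nonneg (p : ℝ) : 0 ≤ lambdaOneStar p :=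
  Real.sInf_nonneg (by rintro l ⟨v, -, -, -, rfl⟩; positivity)

theorem exists_of_lambdaOneStar_lt {p c : ℝ} (h : lambdaOneStar p < c) :
    ∃ v, PeriodicC1 v ∧ (∫ x in (0:ℝ)..(2 * π), v x) = 0 ∧
      perNorm p (deriv v) ^ 2 < c * perNorm 2 v ^ 2 := by
  have hsin : sin ≠ 0 := fun h => by simpa using congrFun h (π / 2)
  obtain ⟨l, ⟨v, hv, hv0, hmean, rfl⟩, hl⟩ := exists_lt_of_csInf_lt
    (by exact ⟨_, sin, ⟨sin_periodic, contDiff_sin⟩, hsin, by simp [integral_sin], rfl⟩) h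
  exact ⟨v, hv, hmean, (div_lt_iff₀ (perNorm_two_sq_pos hv.1 hv.2.continuous hv0)).mp hl⟩

noncomputable def rayleighInf (p q m : ℝ) : ℝ :=
  ⨅ u : {u : ℝ → ℝ // PeriodicC1 u ∧ u ≠ 0}, rayleighQuotient p q m u

theorem rayleighInf_eq_sInf (p q m : ℝ) : rayleighInf p q m = sInf {l : ℝ | ∃ u : ℝ → ℝ,
    PeriodicC1 u ∧ u ≠ 0 ∧ l = ((perNorm p (deriv u)) ^ 2 + m * (perNorm q u) ^ 2) /
      (perNorm p u) ^ 2} := by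
  rw [rayleighInf, iInf]
  congr 1
  ext l
  simp [rayleighQuotient, eq_comm, and_assoc]

section rayleighInf

variable {p q m : ℝ}

theorem periodicC1_one_ne_zero : PeriodicC1 (fun _ => 1) ∧ (fun _ : ℝ => (1 : ℝ)) ≠ 0 :=
  ⟨⟨fun _ => rfl, contDiff_const⟩, fun h => one_ne_zero (congrFun h 0)⟩

instance : Nonempty {u : ℝ → ℝ // PeriodicC1 u ∧ u ≠ 0} := ⟨⟨_, periodicC1_one_ne_zero⟩⟩

theorem bddBelow_range_rayleighQuotient (hm : 0 ≤ m) :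
    BddBelow (range fun u : {u : ℝ → ℝ // PeriodicC1 u ∧ u ≠ 0} => rayleighQuotient p q m u) :=
  ⟨0, by rintro _ ⟨u, rfl⟩; exact rayleighQuotient_nonneg p q hm u⟩

theorem rayleighInf_le (hp : p ≠ 0) (hm : 0 ≤ m) : rayleighInf p q m ≤ m :=
  (ciInf_le (bddBelow_range_rayleighQuotient hm) ⟨_, periodicC1_one_ne_zero⟩).trans_eq
    (rayleighQuotient_one hp q m)

theorem concaveOn_rayleighInf : ConcaveOn ℝ (Ici 0) (rayleighInf p q) :=
  ConcaveOn.ciInf (fun u => (concaveOn_rayleighQuotient p q u).subset (subset_univ _)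
    (convex_Ici 0)) fun _ hm => bddBelow_range_rayleighQuotient hm

theorem rayleighInf_lt (hp : 0 < p) (hq : q ≠ 0) (hqp : q < p)
    (hm : lambdaOneStar p / (p - q) < m) : rayleighInf p q m < m := by
  have hpq : 0 < p - q := sub_pos.mpr hqp
  have hm0 : 0 < m := (div_nonneg (lambdaOneStar_nonneg p) hpq.le).trans_lt hm
  obtain ⟨v, hv, hmean, hv_lt⟩ := exists_of_lambdaOneStar_lt ((div_lt_iff₀' hpq).mp hm)
  obtain ⟨u, hu, hu0, hu_lt⟩ := exists_rayleighQuotient_lt hp hq hm0 hv hmean hv_lt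
  exact (ciInf_le (bddBelow_range_rayleighQuotient hm0.le) ⟨u, hu, hu0⟩).trans_lt hu_lt

end rayleighInf

/-- properties of μ ↦ λ(μ) (Proposition 2.4). -/
theorem lambda_concave_increasing (p q : ℝ) (hq : 1 < q) (hqp : q < p)
    (lam : ℝ → ℝ)
    (hlam : ∀ m : ℝ, lam m = sInf { l : ℝ | ∃ u : ℝ → ℝ, PeriodicC1 u ∧ u ≠ 0 ∧
      l = ((perNorm p (deriv u)) ^ 2 + m * (perNorm q u) ^ 2) / (perNorm p u) ^ 2 }) :
    ConcaveOn ℝ (Set.Ioi (0:ℝ)) lam ∧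
    (∀ m : ℝ, 0 < m → lam m ≤ m) ∧
    (∀ m : ℝ, lambdaOneStar p / (p - q) < m → lam m < m) := by
  have hp : 0 < p := by linarith
  obtain rfl : lam = rayleighInf p q :=
    funext fun m => (hlam m).trans (rayleighInf_eq_sInf p q m).symm
  exact ⟨concaveOn_rayleighInf.subset Ioi_subset_Ici_self (convex_Ioi 0),
    fun m hm => rayleighInf_le hp.ne' hm.le,
    fun m hm => rayleighInf_lt hp (zero_lt_one.trans hq).ne' hqp hm⟩
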